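/- arXiv:2309.02948 — 3 statements merged into one kernel-verified Lean document; each statement's English description precedes it below -/
import Mathlib

section
/- Fix integers d ≥ 1 and s ≥ 1. There exists a constant C > 0, depending only on d and s, such that the following holds for every prime p, every power q of p, every integer r ≥ 1 and every integer n ≥ 2. Let f(X) ∈ F_{q^r}(X) be a rational function of degree at most d which is not an n-th power of a rational function in closure(F_p)(X). Then for every finite set V ⊆ closure(F_p) of cardinality V_0, the number of vectors v = (v_1, …, v_{2s}) ∈ V^{2s} such that P_{v,f}(X) is an n-th power of some rational function in closure(F_p)(X) is at most C · V_0^s. -/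
/-!
Over the algebraic closure `f` is not an `n`-th power, so it has a point `w` whose order is
not divisible by `n`. If `P_{v,f} = g ^ n`, then for every `x` the alternating sum of the orders
of `f` at the points `x + v_i` is divisible by `n`; at `x = w - v_i` this forces some `j ≠ i`
with `w - v_i + v_j` a zero or pole of `f`, so `v_i - v_j ∈ Z - Z`, where `Z` is the set of the
at most `2d` zeros and poles of `f`. Choosing such a partner `j i` for each `i` gives a
fixed-point-free map `j`, and `v` is determined by `j`, the differences `v_i - v_{j i} ∈ Z - Z`
and its values at one point of each component of the functional graph of `j`; every component
has at least two points, so there are at most `s` of them. Hence at most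
`(2s)^{2s} (4d^2)^{2s} V_0^s` vectors qualify.
-/

open Polynomial

open scoped Classical

noncomputable section

namespace RestrictedCoords

variable {K L : Type*} [Field K] [Field L]

/-- The degree of a rational function: the maximum of the degrees of its numerator
and denominator (in lowest terms). -/
def ratDeg (f : RatFunc K) : ℕ := max f.num.natDegree f.denom.natDegree

/-- The order of `f` at `w`: the unique integer such that `(X - w) ^ (ordAt w f) * f`
extends to a rational function with neither a zero nor a pole at `w`.
(Here negative values correspond to poles.) -/
def ordAt (w : K) (f : RatFunc K) : ℤ :=
  (f.num.rootMultiplicity w : ℤ) - (f.denom.rootMultiplicity w : ℤ)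

/-- `f` has a (finite) pole at `w`. -/
def HasPoleAt (f : RatFunc K) (w : K) : Prop := f.denom.eval w = 0

/-- The image of a rational function under a field embedding. -/
def ratMap (φ : K →+* L) (f : RatFunc K) : RatFunc L :=
  algebraMap L[X] (RatFunc L) (f.num.map φ) / algebraMap L[X] (RatFunc L) (f.denom.map φ)

/-- The shifted rational function `f(X + v)`. -/
def shift (v : K) (f : RatFunc K) : RatFunc K :=
  algebraMap K[X] (RatFunc K) (f.num.comp (X + C v)) /
    algebraMap K[X] (RatFunc K) (f.denom.comp (X + C v))

/-- `P_{v,f}(X) = ∏_{i=1}^{s} f(X + v_i) / f(X + v_{s+i})`. -/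
def Pvf (s : ℕ) (f : RatFunc K) (v : Fin (s + s) → K) : RatFunc K :=
  ∏ i : Fin s, shift (v (i.castAdd s)) f / shift (v (i.addNat s)) f

/-- `L_{v,f}(X) = ∑_{i=1}^{s} (f(X + v_i) - f(X + v_{s+i}))`. -/
def Lvf (s : ℕ) (f : RatFunc K) (v : Fin (s + s) → K) : RatFunc K :=
  ∑ i : Fin s, (shift (v (i.castAdd s)) f - shift (v (i.addNat s)) f)

/-- Membership in the class `Q_{d,n}`: rational functions of degree at most `d`
which are not an `n`-th power of a rational function over the algebraic closure. -/
def MemQ (d n : ℕ) (f : RatFunc K) : Prop :=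
  ratDeg f ≤ d ∧
    ¬ ∃ g : RatFunc (AlgebraicClosure K),
        ratMap (algebraMap K (AlgebraicClosure K)) f = g ^ n

/-- Membership in the class `R_d`: rational functions of degree at most `d`
which have at least one finite pole (over the algebraic closure) whose order is not
a multiple of `p`. -/
def MemR (p d : ℕ) (f : RatFunc K) : Prop :=
  ratDeg f ≤ d ∧
    ∃ w : AlgebraicClosure K,
      HasPoleAt (ratMap (algebraMap K (AlgebraicClosure K)) f) w ∧
        ¬ (p : ℤ) ∣ ordAt w (ratMap (algebraMap K (AlgebraicClosure K)) f)

/-- Membership in the exceptional class `E`: rational functions of the form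
`α (h(X)^p - h(X)) + β X`. -/
def MemE (p : ℕ) (f : RatFunc L) : Prop :=
  ∃ α β : L, ∃ h : RatFunc L,
    f = RatFunc.C α * (h ^ p - h) + RatFunc.C β * RatFunc.X

/-- Membership in the class `P_d`: rational functions of degree `d` such that for
every nonzero `ω` the difference `f(X + ω) - f(X)` is not of the exceptional form
`α (g(X)^p - g(X)) + β X` over the algebraic closure. -/
def MemP (p d : ℕ) (f : RatFunc K) : Prop :=
  ratDeg f = d ∧
    ∀ ω : K, ω ≠ 0 →
      ¬ MemE p (ratMap (algebraMap K (AlgebraicClosure K)) (shift ω f - f))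

/-- The set `S_r(A)` of elements of `F_{q^r}` all of whose coordinates in the basis `θ`
belong to `A`. -/
def SrSet {Fq K : Type*} [Field Fq] [Fintype Fq] [Field K] [Algebra Fq K]
    {r : ℕ} (θ : Module.Basis (Fin r) Fq K) (A : Finset Fq) : Finset K :=
  (Fintype.piFinset fun _ : Fin r => A).image fun a => ∑ i, a i • θ i

/-- The mixed character sum `∑_{x ∈ T} χ(f₁(x)) ψ(f₂(x))`, where the points `x`
which are poles of `f₁` or `f₂` are excluded from the summation. -/
def charSum (χ : MulChar K ℂ) (ψ : AddChar K ℂ) (f₁ f₂ : RatFunc K)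
    (T : Finset K) : ℂ :=
  ∑ x ∈ T,
    if HasPoleAt f₁ x ∨ HasPoleAt f₂ x then 0
    else χ (f₁.eval (RingHom.id K) x) * ψ (f₂.eval (RingHom.id K) x)

/-- `κ_s(ρ) = (sρ(2ρ-1) + ρ - 1) / (4s(sρ+1))`. -/
def kappa (s : ℕ) (ρ : ℝ) : ℝ :=
  ((s : ℝ) * ρ * (2 * ρ - 1) + ρ - 1) / (4 * (s : ℝ) * ((s : ℝ) * ρ + 1))

open scoped Pointwise

section Order

variable {L : Type*} [Field L]

lemma rootMultiplicity_comp_X_add_C (P : L[X]) (a w : L) :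
    (P.comp (X + C w)).rootMultiplicity a = P.rootMultiplicity (a + w) := by
  simp only [rootMultiplicity_eq_natTrailingDegree, comp_assoc, add_comp, X_comp, C_comp,
    map_add, add_assoc, add_comm (C a)]

lemma ordAt_algebraMap_div {F : RatFunc L} {p q : L[X]} (hp : p ≠ 0) (hq : q ≠ 0)
    (hF : F = algebraMap L[X] (RatFunc L) p / algebraMap L[X] (RatFunc L) q) (x : L) :
    ordAt x F = (p.rootMultiplicity x : ℤ) - q.rootMultiplicity x := by
  have hF0 : F ≠ 0 := hF ▸ div_ne_zero (RatFunc.algebraMap_ne_zero hp)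
    (RatFunc.algebraMap_ne_zero hq)
  have hcross : F.num * q = p * F.denom := by
    apply RatFunc.algebraMap_injective
    rw [← RatFunc.num_div_denom F, div_eq_div_iff (RatFunc.algebraMap_ne_zero F.denom_ne_zero)
      (RatFunc.algebraMap_ne_zero hq)] at hF
    simpa only [map_mul] using hF
  have hrm := congrArg (rootMultiplicity x) hcross
  rw [rootMultiplicity_mul (mul_ne_zero (RatFunc.num_ne_zero hF0) hq),
    rootMultiplicity_mul (mul_ne_zero hp F.denom_ne_zero)] at hrm
  unfold ordAt
  omega

lemma ordAt_mul {F G : RatFunc L} (hF : F ≠ 0) (hG : G ≠ 0) (x : L) :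
    ordAt x (F * G) = ordAt x F + ordAt x G := by
  have hrep : F * G = algebraMap L[X] (RatFunc L) (F.num * G.num) /
      algebraMap L[X] (RatFunc L) (F.denom * G.denom) := by
    rw [map_mul, map_mul, mul_div_mul_comm, RatFunc.num_div_denom, RatFunc.num_div_denom]
  rw [ordAt_algebraMap_div (mul_ne_zero (RatFunc.num_ne_zero hF) (RatFunc.num_ne_zero hG))
    (mul_ne_zero F.denom_ne_zero G.denom_ne_zero) hrep,
    rootMultiplicity_mul (mul_ne_zero (RatFunc.num_ne_zero hF) (RatFunc.num_ne_zero hG)),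
    rootMultiplicity_mul (mul_ne_zero F.denom_ne_zero G.denom_ne_zero)]
  unfold ordAt
  push_cast
  ring

lemma ordAt_inv {F : RatFunc L} (hF : F ≠ 0) (x : L) : ordAt x F⁻¹ = -ordAt x F := by
  have hrep : F⁻¹ = algebraMap L[X] (RatFunc L) F.denom / algebraMap L[X] (RatFunc L) F.num := by
    rw [← inv_div, RatFunc.num_div_denom]
  rw [ordAt_algebraMap_div F.denom_ne_zero (RatFunc.num_ne_zero hF) hrep, ordAt, neg_sub]

lemma ordAt_div {F G : RatFunc L} (hF : F ≠ 0) (hG : G ≠ 0) (x : L) :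
    ordAt x (F / G) = ordAt x F - ordAt x G := by
  rw [div_eq_mul_inv, ordAt_mul hF (inv_ne_zero hG), ordAt_inv hG, sub_eq_add_neg]

lemma ordAt_pow {F : RatFunc L} (hF : F ≠ 0) (n : ℕ) (x : L) :
    ordAt x (F ^ n) = n * ordAt x F := by
  induction n with
  | zero => simp [ordAt]
  | succ n ih => rw [pow_succ, ordAt_mul (pow_ne_zero n hF) hF, ih]; push_cast; ring

lemma ordAt_prod {ι : Type*} (t : Finset ι) {F : ι → RatFunc L} (hF : ∀ i ∈ t, F i ≠ 0)
    (x : L) : ordAt x (∏ i ∈ t, F i) = ∑ i ∈ t, ordAt x (F i) := by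
  classical
  induction t using Finset.induction_on with
  | empty => simp [ordAt]
  | insert a t ha ih =>
    rw [Finset.prod_insert ha, Finset.sum_insert ha, ordAt_mul (hF a (t.mem_insert_self a))
      (Finset.prod_ne_zero_iff.2 fun i hi => hF i (Finset.mem_insert_of_mem hi)),
      ih fun i hi => hF i (Finset.mem_insert_of_mem hi)]

lemma shift_ne_zero {F : RatFunc L} (hF : F ≠ 0) (v : L) : shift v F ≠ 0 :=
  div_ne_zero (RatFunc.algebraMap_ne_zero (comp_X_add_C_ne_zero_iff.2 (RatFunc.num_ne_zero hF)))
    (RatFunc.algebraMap_ne_zero (comp_X_add_C_ne_zero_iff.2 F.denom_ne_zero))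

lemma ordAt_shift {F : RatFunc L} (hF : F ≠ 0) (v x : L) :
    ordAt x (shift v F) = ordAt (x + v) F := by
  rw [ordAt_algebraMap_div (F := shift v F) (comp_X_add_C_ne_zero_iff.2 (RatFunc.num_ne_zero hF))
    (comp_X_add_C_ne_zero_iff.2 F.denom_ne_zero) rfl x, rootMultiplicity_comp_X_add_C,
    rootMultiplicity_comp_X_add_C, ordAt]

lemma Pvf_ne_zero {F : RatFunc L} (hF : F ≠ 0) (s : ℕ) (v : Fin (s + s) → L) :
    Pvf s F v ≠ 0 :=
  Finset.prod_ne_zero_iff.2 fun _ _ => div_ne_zero (shift_ne_zero hF _) (shift_ne_zero hF _)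

lemma ordAt_Pvf {F : RatFunc L} (hF : F ≠ 0) (s : ℕ) (v : Fin (s + s) → L) (x : L) :
    ordAt x (Pvf s F v) =
      ∑ i : Fin s, (ordAt (x + v (i.castAdd s)) F - ordAt (x + v (i.addNat s)) F) := by
  rw [Pvf, ordAt_prod _ fun _ _ => div_ne_zero (shift_ne_zero hF _) (shift_ne_zero hF _)]
  simp only [ordAt_div (shift_ne_zero hF _) (shift_ne_zero hF _), ordAt_shift hF]

end Order

section AlgClosed

variable {L : Type*} [Field L] [IsAlgClosed L]

lemma exists_eq_pow_of_forall_dvd_rootMultiplicity {P : L[X]} {n : ℕ} (hn : 0 < n)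
    (h : ∀ x, n ∣ P.rootMultiplicity x) : ∃ u : L[X], P = u ^ n := by
  classical
  obtain ⟨T, hT⟩ := Multiset.exists_smul_of_dvd_count P.roots
    (fun a _ => by rw [count_roots]; exact h a)
  obtain ⟨e, he⟩ := IsAlgClosed.exists_pow_nat_eq P.leadingCoeff hn
  refine ⟨C e * (T.map fun a => X - C a).prod, ?_⟩
  rw [mul_pow, ← map_pow, he, ← Multiset.prod_nsmul, ← Multiset.map_nsmul, ← hT,
    ← (IsAlgClosed.splits P).eq_prod_roots]

lemma exists_eq_pow_of_forall_dvd_ordAt {F : RatFunc L} (hF : F ≠ 0) {n : ℕ} (hn : 0 < n)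
    (h : ∀ x, (n : ℤ) ∣ ordAt x F) : ∃ g : RatFunc L, F = g ^ n := by
  have hnum : F.num ≠ 0 := RatFunc.num_ne_zero hF
  have hden : F.denom ≠ 0 := F.denom_ne_zero
  -- coprimality of `num` and `denom`: at each point one of the two multiplicities vanishes
  have hsep : ∀ x, F.num.rootMultiplicity x = 0 ∨ F.denom.rootMultiplicity x = 0 := by
    intro x
    by_contra! hboth
    exact not_isUnit_X_sub_C x ((RatFunc.isCoprime_num_denom F).isUnit_of_dvd'
      (dvd_iff_isRoot.2 ((rootMultiplicity_pos hnum).1 (Nat.pos_of_ne_zero hboth.1)))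
      (dvd_iff_isRoot.2 ((rootMultiplicity_pos hden).1 (Nat.pos_of_ne_zero hboth.2))))
  have hdvd : ∀ x, n ∣ F.num.rootMultiplicity x ∧ n ∣ F.denom.rootMultiplicity x := by
    intro x
    have hx := h x
    unfold ordAt at hx
    rcases hsep x with h0 | h0 <;> rw [h0] at hx ⊢
    · simp only [Nat.cast_zero, zero_sub, dvd_neg] at hx
      exact ⟨dvd_zero n, by exact_mod_cast hx⟩
    · simp only [Nat.cast_zero, sub_zero] at hx
      exact ⟨by exact_mod_cast hx, dvd_zero n⟩
  obtain ⟨u, hu⟩ :=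
    exists_eq_pow_of_forall_dvd_rootMultiplicity hn fun x => (hdvd x).1
  obtain ⟨w, hw⟩ :=
    exists_eq_pow_of_forall_dvd_rootMultiplicity hn fun x => (hdvd x).2
  refine ⟨algebraMap L[X] (RatFunc L) u / algebraMap L[X] (RatFunc L) w, ?_⟩
  rw [div_pow, ← map_pow, ← map_pow, ← hu, ← hw, RatFunc.num_div_denom]

end AlgClosed

lemma mem_roots_of_ordAt_ne_zero {L : Type*} [Field L] {F : RatFunc L} {p q : L[X]}
    (hp : p ≠ 0) (hq : q ≠ 0)
    (hF : F = algebraMap L[X] (RatFunc L) p / algebraMap L[X] (RatFunc L) q) {x : L}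
    (hx : ordAt x F ≠ 0) : x ∈ (p * q).roots := by
  rw [ordAt_algebraMap_div hp hq hF] at hx
  rw [mem_roots (mul_ne_zero hp hq), ← rootMultiplicity_pos (mul_ne_zero hp hq),
    rootMultiplicity_mul (mul_ne_zero hp hq)]
  omega

lemma sum_castAdd_sub_addNat {s : ℕ} (f : Fin (s + s) → ℤ) :
    ∑ i : Fin s, (f (i.castAdd s) - f (i.addNat s)) =
      ∑ k : Fin (s + s), (if (k : ℕ) < s then 1 else -1) * f k := by
  rw [Fin.sum_univ_add, Finset.sum_sub_distrib, sub_eq_add_neg, ← Finset.sum_neg_distrib]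
  congr 1 <;> simp

lemma exists_ne_apply_ne_zero_of_dvd_sum_sub {G : Type*} [AddCommGroup G] {s : ℕ}
    (o : G → ℤ) {n : ℤ} {v : Fin (s + s) → G}
    (hdvd : ∀ x, n ∣ ∑ i : Fin s, (o (x + v (i.castAdd s)) - o (x + v (i.addNat s))))
    {w : G} (hw : ¬ n ∣ o w) (i : Fin (s + s)) : ∃ j ≠ i, o (w - v i + v j) ≠ 0 := by
  by_contra! h
  have hsum := hdvd (w - v i)
  rw [sum_castAdd_sub_addNat (fun k => o (w - v i + v k)),
    Finset.sum_eq_single i (fun j _ hj => by rw [h j hj, mul_zero]) (by simp),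
    sub_add_cancel] at hsum
  by_cases hi : (i : ℕ) < s <;> simp [hi] at hsum <;> exact hw hsum

lemma exists_finset_ordAt_support_card_le {K L : Type*} [Field K] [Field L] (φ : K →+* L)
    {f : RatFunc K} (hF : ratMap φ f ≠ 0) :
    ∃ Z : Finset L, Z.card ≤ 2 * ratDeg f ∧ ∀ x, ordAt x (ratMap φ f) ≠ 0 → x ∈ Z := by
  have hp : f.num.map φ ≠ 0 := by
    rintro hp
    exact hF (by rw [ratMap, hp, map_zero, zero_div])
  have hq : f.denom.map φ ≠ 0 := Polynomial.map_ne_zero f.denom_ne_zero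
  refine ⟨(f.num.map φ * f.denom.map φ).roots.toFinset, ?_,
    fun x hx => Multiset.mem_toFinset.2 (mem_roots_of_ordAt_ne_zero hp hq rfl hx)⟩
  calc _ ≤ Multiset.card (f.num.map φ * f.denom.map φ).roots := Multiset.toFinset_card_le _
    _ ≤ (f.num.map φ * f.denom.map φ).natDegree := card_roots' _
    _ = f.num.natDegree + f.denom.natDegree := by
      rw [natDegree_mul hp hq, natDegree_map, natDegree_map]
    _ ≤ 2 * ratDeg f := by unfold ratDeg; omega

lemma forall_exists_ne_sub_mem_of_Pvf_eq_pow {L : Type*} [Field L] {F : RatFunc L}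
    (hF : F ≠ 0) {Z : Finset L} (hZ : ∀ x, ordAt x F ≠ 0 → x ∈ Z) {n : ℕ} (hn : n ≠ 0) {w : L}
    (hw : ¬ (n : ℤ) ∣ ordAt w F) {s : ℕ} {v : Fin (s + s) → L} {g : RatFunc L}
    (hg : Pvf s F v = g ^ n) (i : Fin (s + s)) : ∃ j ≠ i, v i - v j ∈ Z - Z := by
  have hg0 : g ≠ 0 := by
    rintro rfl
    exact Pvf_ne_zero hF s v (hg.trans (zero_pow hn))
  have hdvd : ∀ x, (n : ℤ) ∣
      ∑ i : Fin s, (ordAt (x + v (i.castAdd s)) F - ordAt (x + v (i.addNat s)) F) := by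
    intro x
    rw [← ordAt_Pvf hF, hg, ordAt_pow hg0]
    exact dvd_mul_right _ _
  obtain ⟨j, hji, hj⟩ := exists_ne_apply_ne_zero_of_dvd_sum_sub (ordAt · F) hdvd hw i
  refine ⟨j, hji, ?_⟩
  rw [show v i - v j = w - (w - v i + v j) by abel]
  exact Finset.sub_mem_sub (hZ w fun h => hw (h ▸ dvd_zero _)) (hZ _ hj)

lemma apply_quot_out_eq {α β : Type*} {r : α → α → Prop} {u : α → β}
    (hu : ∀ a b, r a b → u a = u b) (a : α) : u (Quot.mk r a).out = u a :=
  calc u (Quot.mk r a).out = Quot.lift u hu (Quot.mk r (Quot.mk r a).out) := rfl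
    _ = u a := by rw [Quot.out_eq]

section Counting

variable {ι G : Type*} [Fintype ι] [DecidableEq ι] [AddCommGroup G]

omit [DecidableEq ι] in
lemma two_mul_card_quot_le {j : ι → ι} (hj : ∀ i, j i ≠ i) :
    2 * Nat.card (Quot (j · = ·)) ≤ Fintype.card ι := by
  have := Fintype.ofFinite (Quot (j · = ·))
  rw [Nat.card_eq_fintype_card]
  -- the fibre of `Quot.mk` through `i` contains `i` and `j i ≠ i`
  refine Finset.mul_card_image_le_card_of_maps_to (s := Finset.univ)
    (f := Quot.mk (j · = ·)) (fun _ _ => Finset.mem_univ _) 2 fun q _ => ?_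
  obtain ⟨i, rfl⟩ := Quot.exists_rep q
  exact Finset.one_lt_card.2 ⟨i, by simp, j i,
    Finset.mem_filter.2 ⟨Finset.mem_univ _, (Quot.sound (r := (j · = ·)) rfl).symm⟩, (hj i).symm⟩

lemma card_filter_forall_sub_mem_le {j : ι → ι} (hj : ∀ i, j i ≠ i) (Δ : Finset G)
    {V : Finset G} (hV : V.Nonempty) :
    ((Fintype.piFinset fun _ : ι => V).filter fun v => ∀ i, v i - v (j i) ∈ Δ).card ≤
      Δ.card ^ Fintype.card ι * V.card ^ (Fintype.card ι / 2) := by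
  have := Fintype.ofFinite (Quot (j · = ·))
  have hinj :
      Set.InjOn (fun v : ι → G => (fun i => v i - v (j i), fun q : Quot (j · = ·) => v q.out))
      ((Fintype.piFinset fun _ : ι => V).filter fun v => ∀ i, v i - v (j i) ∈ Δ) := by
    intro v _ v' _ hvv'
    simp only [Prod.mk.injEq, funext_iff] at hvv'
    have hu : ∀ a b, j a = b → (v - v') a = (v - v') b := by
      rintro a _ rfl
      simp only [Pi.sub_apply]
      linear_combination (norm := abel) hvv'.1 a
    funext i
    rw [← sub_eq_zero, ← Pi.sub_apply, ← apply_quot_out_eq hu i, Pi.sub_apply, sub_eq_zero]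
    exact hvv'.2 _
  calc _ ≤ ((Fintype.piFinset fun _ : ι => Δ) ×ˢ
          (Fintype.piFinset fun _ : Quot (j · = ·) => V)).card :=
        Finset.card_le_card_of_injOn _ (fun v hv => by
          simp only [Finset.coe_filter, Fintype.mem_piFinset, Set.mem_ofPred_eq] at hv
          simp [hv.1, hv.2]) hinj
    _ = Δ.card ^ Fintype.card ι * V.card ^ Nat.card (Quot (j · = ·)) := by
        simp [Finset.card_product, Nat.card_eq_fintype_card]
    _ ≤ _ := by
        gcongr
        · exact hV.card_pos
        · have := two_mul_card_quot_le hj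
          omega

lemma card_filter_forall_exists_ne_sub_mem_le (Δ : Finset G) {V : Finset G} (hV : V.Nonempty) :
    ((Fintype.piFinset fun _ : ι => V).filter fun v => ∀ i, ∃ j ≠ i, v i - v j ∈ Δ).card ≤
      Fintype.card ι ^ Fintype.card ι * Δ.card ^ Fintype.card ι *
        V.card ^ (Fintype.card ι / 2) := by
  set J := Finset.univ.filter fun j : ι → ι => ∀ i, j i ≠ i
  have hsub : ((Fintype.piFinset fun _ : ι => V).filter fun v => ∀ i, ∃ j ≠ i, v i - v j ∈ Δ) ⊆
      J.biUnion fun j =>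
        (Fintype.piFinset fun _ : ι => V).filter fun v => ∀ i, v i - v (j i) ∈ Δ := by
    intro v hv
    rw [Finset.mem_filter] at hv
    choose j hji hj using hv.2
    exact Finset.mem_biUnion.2 ⟨j, by simp [J, hji], Finset.mem_filter.2 ⟨hv.1, hj⟩⟩
  calc _ ≤ _ := Finset.card_le_card hsub
    _ ≤ ∑ j ∈ J, ((Fintype.piFinset fun _ : ι => V).filter
          fun v => ∀ i, v i - v (j i) ∈ Δ).card := Finset.card_biUnion_le
    _ ≤ J.card * (Δ.card ^ Fintype.card ι * V.card ^ (Fintype.card ι / 2)) :=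
        Finset.sum_le_card_nsmul _ _ _ fun j hj =>
          card_filter_forall_sub_mem_le (Finset.mem_filter.1 hj).2 Δ hV
    _ ≤ _ := by
        rw [← mul_assoc]
        gcongr
        exact (Finset.card_filter_le _ _).trans (by simp)

end Counting

/-- Lemma 4.1 of the paper: for `f ∈ Q_{d,n}`, the number of vectors
`v ∈ V^{2s}` for which `P_{v,f}` is an `n`-th power over the algebraic closure
is `O(V₀^s)`, uniformly in `p`, `q`, `r`, `n` and `V`. -/
theorem statement_4 (d s : ℕ) (hd : 1 ≤ d) (hs : 1 ≤ s) :
    ∃ C : ℝ, 0 < C ∧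
      ∀ (p q a : ℕ), p.Prime → 0 < a → q = p ^ a →
      ∀ (r : ℕ), 1 ≤ r →
      ∀ (n : ℕ), 2 ≤ n →
      ∀ (K : Type) [Field K] [Fintype K], Fintype.card K = q ^ r →
      ∀ (f : RatFunc K), MemQ d n f →
      ∀ (V : Finset (AlgebraicClosure K)),
        (Set.ncard {v : Fin (s + s) → AlgebraicClosure K |
            (∀ i, v i ∈ V) ∧
              ∃ g : RatFunc (AlgebraicClosure K),
                Pvf s (ratMap (algebraMap K (AlgebraicClosure K)) f) v = g ^ n} : ℝ)
          ≤ C * (V.card : ℝ) ^ s := by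
  refine ⟨((s + s) ^ (s + s) * (2 * d * (2 * d)) ^ (s + s) : ℕ), by positivity, ?_⟩
  intro _ _ _ _ _ _ _ _ n hn K _ _ _ f ⟨hdeg, hnotpow⟩ V
  set F := ratMap (algebraMap K (AlgebraicClosure K)) f
  have hF : F ≠ 0 := fun h => hnotpow ⟨0, by rw [h, zero_pow (by omega)]⟩
  obtain ⟨w, hw⟩ : ∃ w, ¬ (n : ℤ) ∣ ordAt w F := by
    by_contra! h
    exact hnotpow (exists_eq_pow_of_forall_dvd_ordAt hF (by omega) h)
  obtain ⟨Z, hZcard, hZ⟩ := exists_finset_ordAt_support_card_le _ hF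
  rcases V.eq_empty_or_nonempty with rfl | hV
  · have : Nonempty (Fin (s + s)) := ⟨⟨0, by omega⟩⟩
    simp [show s ≠ 0 by omega]
  have hcount := card_filter_forall_exists_ne_sub_mem_le (Z - Z) hV (ι := Fin (s + s))
  rw [Fintype.card_fin, show (s + s) / 2 = s by omega] at hcount
  have hZZ : (Z - Z).card ≤ 2 * d * (2 * d) := Finset.card_sub_le.trans (by gcongr <;> omega)
  calc _ ≤ (((s + s) ^ (s + s) * (Z - Z).card ^ (s + s) * V.card ^ s : ℕ) : ℝ) := by
        refine Nat.cast_le.2 (le_trans ?_ hcount)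
        rw [← Set.ncard_coe_finset]
        refine Set.ncard_le_ncard ?_ (Finset.finite_toSet _)
        rintro v ⟨hvV, g, hg⟩
        simpa [hvV] using forall_exists_ne_sub_mem_of_Pvf_eq_pow hF hZ (by omega) hw hg
    _ ≤ _ := by push_cast; gcongr; exact_mod_cast hZZ

end RestrictedCoords
end
end

section
/- Fix integers d ≥ 1 and s ≥ 1. There exists a constant C > 0, depending only on d and s, such that the following holds for every prime p, every power q of p and every integer r ≥ 1. Let f(X) ∈ F_{q^r}(X) be a rational function of degree at most d which has at least one finite pole whose order is not a multiple of p. Then for every finite set V ⊆ closure(F_p) of cardinality V_0, the number of vectors v = (v_1, …, v_{2s}) ∈ V^{2s} such that L_{v,f} belongs to E is at most C · V_0^s. -/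
open Polynomial

open scoped Classical

noncomputable section

namespace RestrictedCoords

variable {K L : Type*} [Field K] [Field L]

/-!
Let `w` be a pole of `f` whose order `m` is prime to `p`. If a coordinate `v i` is isolated, in
the sense that `w - v i + v j` is not a pole of `f` for any `j ≠ i`, then at the point `w - v i`
exactly one summand of `L_{v,f}` has a pole, so `L_{v,f}` has order `-m` there. On the other hand
`α (h ^ p - h) + β X` has nonnegative order at a point unless `h` has a pole there, in which case
(for `α ≠ 0`) its order is `p` times that of `h`. Hence, for exceptional `v`, every coordinate has
a partner `j ≠ i` with `v i - v j` in the difference set of the at most `d` poles of `f`.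
Recording a fixed-point-free partner map `n` and the differences `δ i = v i - v (n i)`, the vector
`v` is determined by its values at the least points of the cycles of `n`; every cycle has length
at least two, so there are at most `s` of them.
-/

section FunctionalGraph

open Function

variable {α : Type*} (f : α → α)

lemma exists_iterate_mem_periodicPts [Finite α] (a : α) : ∃ j, f^[j] a ∈ periodicPts f := by
  obtain ⟨k, l, hkl, heq⟩ := Finite.exists_ne_map_eq_of_infinite fun k : ℕ => f^[k] a
  wlog hlt : k < l generalizing k l
  · exact this l k hkl.symm heq.symm (lt_of_le_of_ne (not_lt.mp hlt) hkl.symm)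
  refine ⟨k, l - k, Nat.sub_pos_of_lt hlt, ?_⟩
  rw [IsPeriodicPt, IsFixedPt, ← iterate_add_apply, Nat.sub_add_cancel hlt.le]
  exact heq.symm

lemma iterate_minimalPeriod_sub_one_apply {a : α} (ha : a ∈ periodicPts f) :
    f^[minimalPeriod f a - 1] (f a) = a := by
  rw [← iterate_succ_apply, Nat.succ_eq_add_one,
    Nat.sub_add_cancel (minimalPeriod_pos_of_mem_periodicPts ha), iterate_minimalPeriod]

variable {ι : Type*} [Fintype ι] [LinearOrder ι] (n : ι → ι)

def cycleMins : Finset ι :=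
  Finset.univ.filter fun a => a ∈ periodicPts n ∧ ∀ k, a ≤ n^[k] a

lemma mem_cycleMins {a : ι} :
    a ∈ cycleMins n ↔ a ∈ periodicPts n ∧ ∀ k, a ≤ n^[k] a := by
  simp [cycleMins]

lemma exists_iterate_mem_cycleMins (a : ι) : ∃ j, n^[j] a ∈ cycleMins n := by
  obtain ⟨j, hj⟩ := exists_iterate_mem_periodicPts n a
  have hpos := minimalPeriod_pos_of_mem_periodicPts hj
  obtain ⟨l, -, hl⟩ := (Finset.range (minimalPeriod n (n^[j] a))).exists_min_image
    (fun l => n^[l] (n^[j] a)) ⟨0, Finset.mem_range.mpr hpos⟩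
  obtain ⟨m, hm, hper⟩ := mem_periodicPts.mp hj
  refine ⟨l + j, ?_⟩
  rw [iterate_add_apply, mem_cycleMins]
  refine ⟨mk_mem_periodicPts hm (hper.apply_iterate l), fun k => ?_⟩
  rw [← iterate_add_apply n k l, ← iterate_mod_minimalPeriod_eq (n := k + l)]
  exact hl _ (Finset.mem_range.mpr (Nat.mod_lt _ hpos))

lemma two_mul_card_cycleMins_le (hn : ∀ i, n i ≠ i) :
    2 * (cycleMins n).card ≤ Fintype.card ι := by
  have hmaps : ∀ a ∈ cycleMins n, n a ∈ (cycleMins n)ᶜ := by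
    intro a ha
    rw [Finset.mem_compl]
    intro hna
    obtain ⟨hper, hmin⟩ := (mem_cycleMins n).mp ha
    have hle := ((mem_cycleMins n).mp hna).2 (minimalPeriod n a - 1)
    rw [iterate_minimalPeriod_sub_one_apply n hper] at hle
    exact hn a (le_antisymm hle (hmin 1))
  have hle {a b} (ha : a ∈ cycleMins n) (hb : b ∈ cycleMins n) (hab : n a = n b) : b ≤ a :=
    calc b ≤ n^[minimalPeriod n a - 1] (n b) := by
          rw [← iterate_succ_apply]; exact ((mem_cycleMins n).mp hb).2 _
      _ = a := by rw [← hab, iterate_minimalPeriod_sub_one_apply n ((mem_cycleMins n).mp ha).1]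
  have := Finset.card_le_card_of_injOn n hmaps
    fun a ha b hb hab => le_antisymm (hle hb ha hab.symm) (hle ha hb hab)
  rw [Finset.card_compl] at this
  omega

variable {n}

lemma eq_of_eqOn_cycleMins {β : Type*} {g g' : ι → β} (hg : g ∘ n = g) (hg' : g' ∘ n = g')
    (h : ∀ a ∈ cycleMins n, g a = g' a) : g = g' := by
  funext a
  obtain ⟨j, hj⟩ := exists_iterate_mem_cycleMins n a
  rw [← congrFun (iterate_invariant hg j) a, ← congrFun (iterate_invariant hg' j) a]
  exact h _ hj

lemma pow_card_cycleMins_le {M : Type*} (hn : ∀ i, n i ≠ i) (V : Finset M) :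
    V.card ^ (cycleMins n).card ≤ V.card ^ (Fintype.card ι / 2) := by
  rcases Nat.eq_zero_or_pos V.card with hV | hV
  · rcases isEmpty_or_nonempty ι with hι | ⟨⟨a⟩⟩
    · simp [Fintype.card_eq_zero, Finset.univ_eq_empty, cycleMins]
    · obtain ⟨j, hj⟩ := exists_iterate_mem_cycleMins n a
      rw [hV, zero_pow (Finset.card_ne_zero_of_mem hj)]
      exact Nat.zero_le _
  · have := two_mul_card_cycleMins_le n hn
    exact Nat.pow_le_pow_right hV (by omega)

variable {M : Type*} [AddCommGroup M]

lemma card_filter_eq_iterate_add_le (n : ι → ι) (δ : ι → M) (V : Finset M) :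
    ((Fintype.piFinset fun _ : ι => V).filter fun v => ∀ i, v i = v (n i) + δ i).card ≤
      V.card ^ (cycleMins n).card := by
  have hsub {v : ι → M} (hv : ∀ i, v i = v (n i) + δ i) (i : ι) : v i - δ i = v (n i) := by
    rw [hv i, add_sub_cancel_right]
  calc _ ≤ (Fintype.piFinset fun _ : cycleMins n => V).card := by
        refine Finset.card_le_card_of_injOn (fun v a => v a) (fun v hv => ?_)
          fun v hv v' hv' h => ?_
        · simp only [Finset.mem_coe, Finset.mem_filter, Fintype.mem_piFinset] at hv ⊢
          exact fun a => hv.1 a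
        · simp only [Finset.mem_coe, Finset.mem_filter] at hv hv'
          have hzero := eq_of_eqOn_cycleMins (n := n) (g := v - v') (g' := 0)
            (funext fun i => ?_) rfl fun a ha => ?_
          · exact sub_eq_zero.mp hzero
          · rw [comp_apply, Pi.sub_apply, Pi.sub_apply, ← hsub hv.2, ← hsub hv'.2,
              sub_sub_sub_cancel_right]
          · simpa [sub_eq_zero] using congrFun h ⟨a, ha⟩
    _ = V.card ^ (cycleMins n).card := by simp

lemma ncard_forall_exists_sub_mem_le (Δ V : Finset M) :
    {v : ι → M | (∀ i, v i ∈ V) ∧ ∀ i, ∃ j ≠ i, v i - v j ∈ Δ}.ncard ≤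
      Fintype.card ι ^ Fintype.card ι * Δ.card ^ Fintype.card ι *
        V.card ^ (Fintype.card ι / 2) := by
  set A := (Finset.univ.filter fun n : ι → ι => ∀ i, n i ≠ i) ×ˢ
    Fintype.piFinset fun _ : ι => Δ
  set T : (ι → ι) × (ι → M) → Finset (ι → M) := fun nδ =>
    (Fintype.piFinset fun _ : ι => V).filter fun v => ∀ i, v i = v (nδ.1 i) + nδ.2 i
  have hcover :
    {v : ι → M | (∀ i, v i ∈ V) ∧ ∀ i, ∃ j ≠ i, v i - v j ∈ Δ} ⊆ A.biUnion T := by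
    rintro v ⟨hvV, hclose⟩
    choose n hn hΔ using hclose
    simp only [Finset.coe_biUnion, Set.mem_iUnion, Finset.mem_coe]
    refine ⟨(n, fun i => v i - v (n i)), ?_, ?_⟩
    · simp [A, hn, hΔ]
    · simp [T, hvV]
  calc _ ≤ (A.biUnion T).card :=
        (Set.ncard_le_ncard hcover (A.biUnion T).finite_toSet).trans_eq (Set.ncard_coe_finset _)
    _ ≤ ∑ nδ ∈ A, (T nδ).card := Finset.card_biUnion_le
    _ ≤ ∑ nδ ∈ A, V.card ^ (Fintype.card ι / 2) := by
        refine Finset.sum_le_sum fun nδ hnδ => ?_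
        simp only [A, Finset.mem_product, Finset.mem_filter] at hnδ
        exact (card_filter_eq_iterate_add_le _ _ V).trans (pow_card_cycleMins_le hnδ.1.2 V)
    _ ≤ _ := by
        rw [Finset.sum_const, smul_eq_mul]
        gcongr
        rw [Finset.card_product, Fintype.card_piFinset, Finset.prod_const, Finset.card_univ]
        gcongr
        exact (Finset.card_filter_le _ _).trans (by simp)

end FunctionalGraph

section Valuation

open scoped RatFunc

variable {F : Type*} [Field F]

def shiftHom (t : F) : RatFunc F →+* RatFunc F :=
  RatFunc.mapRingHom (taylorAlgHom t) fun q hq => by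
    simpa [mem_nonZeroDivisors_iff_ne_zero] using hq

lemma shiftHom_algebraMap (t : F) (q : F[X]) :
    shiftHom t (algebraMap F[X] (RatFunc F) q) = algebraMap F[X] (RatFunc F) (taylor t q) := by
  simpa [shiftHom, RatFunc.coe_mapRingHom_eq_coe_map] using
    RatFunc.map_apply_div (taylorAlgHom t) _ q 1

lemma shiftHom_div (t : F) (a b : F[X]) :
    shiftHom t (algebraMap F[X] (RatFunc F) a / algebraMap F[X] (RatFunc F) b) =
      algebraMap F[X] (RatFunc F) (taylor t a) / algebraMap F[X] (RatFunc F) (taylor t b) := by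
  rw [map_div₀, shiftHom_algebraMap, shiftHom_algebraMap]

lemma shift_eq_shiftHom (t : F) (f : RatFunc F) : shift t f = shiftHom t f := by
  conv_rhs => rw [← RatFunc.num_div_denom f]
  rw [shiftHom_div]
  rfl

lemma shiftHom_shiftHom (t a : F) (f : RatFunc F) :
    shiftHom t (shiftHom a f) = shiftHom (t + a) f := by
  rw [← RatFunc.num_div_denom f]
  simp only [shiftHom_div, taylor_taylor]

def valAt (t : F) : AddValuation (RatFunc F) (WithTop ℤ) :=
  (HahnSeries.addVal ℤ F).comap ((algebraMap (RatFunc F) (LaurentSeries F)).comp (shiftHom t))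

lemma valAt_apply (t : F) (f : RatFunc F) :
    valAt t f = HahnSeries.addVal ℤ F (algebraMap (RatFunc F) (LaurentSeries F) (shiftHom t f)) :=
  rfl

lemma valAt_shift (t a : F) (f : RatFunc F) : valAt t (shift a f) = valAt (t + a) f := by
  rw [valAt_apply, valAt_apply, shift_eq_shiftHom, shiftHom_shiftHom]

lemma addVal_algebraMap_polynomial {P : F[X]} (hP : P ≠ 0) :
    HahnSeries.addVal ℤ F (algebraMap F[X] (LaurentSeries F) P) = P.natTrailingDegree := by
  have hcoeff (i : ℤ) : (algebraMap F[X] (LaurentSeries F) P).coeff i =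
      if i < 0 then 0 else P.coeff i.natAbs := by
    rw [Polynomial.algebraMap_hahnSeries_apply, PowerSeries.coeff_coe, Polynomial.coeff_coe]
  rw [HahnSeries.addVal_apply]
  refine HahnSeries.orderTop_eq_of_le ?_ fun i hi => ?_
  · rw [HahnSeries.mem_support, hcoeff, if_neg (by omega), Int.natAbs_natCast]
    exact mt trailingCoeff_eq_zero.mp hP
  · rw [HahnSeries.mem_support, hcoeff] at hi
    split_ifs at hi with hneg
    · exact absurd rfl hi
    · have := natTrailingDegree_le_of_ne_zero hi
      omega

lemma valAt_algebraMap {P : F[X]} (hP : P ≠ 0) (t : F) :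
    valAt t (algebraMap F[X] (RatFunc F) P) = P.rootMultiplicity t := by
  rw [valAt_apply, shiftHom_algebraMap, ← IsScalarTower.algebraMap_apply,
    addVal_algebraMap_polynomial ((taylor_eq_zero t P).not.mpr hP),
    rootMultiplicity_eq_natTrailingDegree, taylor_apply]

lemma valAt_algebraMap_nonneg (t : F) (P : F[X]) :
    0 ≤ valAt t (algebraMap F[X] (RatFunc F) P) := by
  rcases eq_or_ne P 0 with rfl | hP
  · simp
  · rw [valAt_algebraMap hP]
    exact_mod_cast Nat.zero_le _

lemma valAt_eq_ordAt {f : RatFunc F} (hf : f ≠ 0) (t : F) : valAt t f = ordAt t f := by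
  rw [← RatFunc.num_div_denom f, AddValuation.map_div, valAt_algebraMap (RatFunc.num_ne_zero hf),
    valAt_algebraMap (RatFunc.denom_ne_zero f), RatFunc.num_div_denom, ordAt]
  rfl

end Valuation

section Exceptional

lemma AddValuation.map_pow_sub_self_of_neg {R : Type*} [CommRing R]
    (v : AddValuation R (WithTop ℤ)) {p : ℕ} (hp : 2 ≤ p) {h : R} (hh : v h < 0) :
    v (h ^ p - h) = p • v h := by
  obtain ⟨k, hk⟩ := WithTop.ne_top_iff_exists.mp (hh.trans (WithTop.coe_lt_top 0)).ne
  have hk0 : k < 0 := WithTop.coe_lt_coe.mp (hk ▸ hh)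
  have hlt : v (h ^ p) < v h := by
    rw [AddValuation.map_pow, ← hk, ← WithTop.coe_nsmul, WithTop.coe_lt_coe, nsmul_eq_mul]
    have hp' : (2 : ℤ) ≤ p := by exact_mod_cast hp
    nlinarith
  rw [AddValuation.map_sub_eq_of_lt_left v hlt, AddValuation.map_pow]

variable {F : Type*} [Field F]

lemma valAt_C {α : F} (hα : α ≠ 0) (t : F) : valAt t (RatFunc.C α) = 0 := by
  rw [← RatFunc.algebraMap_C, valAt_algebraMap (C_ne_zero.mpr hα), rootMultiplicity_C]
  rfl

lemma exists_valAt_eq_mul_of_memE {p : ℕ} (hp : 2 ≤ p) {g : RatFunc F} (hg : MemE p g) (t : F)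
    (hneg : valAt t g < 0) : ∃ k : ℤ, valAt t g = ((p * k : ℤ) : WithTop ℤ) := by
  obtain ⟨α, β, h, rfl⟩ := hg
  have hlin : 0 ≤ valAt t (RatFunc.C β * RatFunc.X) := by
    rw [← RatFunc.algebraMap_C, ← RatFunc.algebraMap_X, ← map_mul]
    exact valAt_algebraMap_nonneg t _
  have ha : valAt t (RatFunc.C α * (h ^ p - h)) < 0 := by
    by_contra! ha
    exact hneg.not_ge ((le_min ha hlin).trans (AddValuation.map_add _ _ _))
  rw [AddValuation.map_add_eq_of_lt_left _ (ha.trans_le hlin)]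
  have hα : α ≠ 0 := by
    rintro rfl
    simp at ha
  rw [AddValuation.map_mul, valAt_C hα, zero_add] at ha ⊢
  have hh : valAt t h < 0 := by
    by_contra! hh
    refine ha.not_ge (AddValuation.map_le_sub _ ?_ hh)
    rw [AddValuation.map_pow]
    exact nsmul_nonneg hh p
  obtain ⟨k, hk⟩ := WithTop.ne_top_iff_exists.mp (hh.trans (WithTop.coe_lt_top 0)).ne
  refine ⟨k, ?_⟩
  rw [AddValuation.map_pow_sub_self_of_neg _ hp hh, ← hk, ← WithTop.coe_nsmul, nsmul_eq_mul]

end Exceptional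

section Isolation

variable {F : Type*} [Field F] {f : RatFunc F} {w : F}

lemma ne_zero_of_hasPoleAt (hw : HasPoleAt f w) : f ≠ 0 := by
  rintro rfl
  simp [HasPoleAt] at hw

lemma ordAt_neg_of_hasPoleAt (hw : HasPoleAt f w) : ordAt w f < 0 := by
  have hnum : f.num.eval w ≠ 0 := by
    obtain ⟨a, b, hab⟩ := RatFunc.isCoprime_num_denom f
    intro h
    simpa [h, show f.denom.eval w = 0 from hw] using congrArg (eval w) hab
  have hden := (rootMultiplicity_pos (RatFunc.denom_ne_zero f)).mpr hw
  rw [ordAt, rootMultiplicity_eq_zero hnum]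
  omega

lemma ordAt_nonneg_of_not_hasPoleAt (hw : ¬ HasPoleAt f w) : 0 ≤ ordAt w f := by
  rw [ordAt, rootMultiplicity_eq_zero hw]
  omega

lemma valAt_nonneg_of_not_hasPoleAt (hw : ¬ HasPoleAt f w) : 0 ≤ valAt w f := by
  rcases eq_or_ne f 0 with rfl | hf
  · simp
  · rw [valAt_eq_ordAt hf]
    exact_mod_cast ordAt_nonneg_of_not_hasPoleAt hw

lemma Lvf_eq_sum (s : ℕ) (f : RatFunc F) (v : Fin (s + s) → F) :
    Lvf s f v = ∑ j : Fin (s + s), (if (j : ℕ) < s then 1 else -1) * shift (v j) f := by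
  simp [Fin.sum_univ_add, Lvf, Finset.sum_add_distrib, sub_eq_add_neg]

lemma valAt_Lvf_of_isolated_pole {s : ℕ} {v : Fin (s + s) → F} (hw : HasPoleAt f w)
    (i₀ : Fin (s + s)) (hiso : ∀ j ≠ i₀, ¬ HasPoleAt f (w - v i₀ + v j)) :
    valAt (w - v i₀) (Lvf s f v) = ordAt w f := by
  have hterm (j : Fin (s + s)) :
      valAt (w - v i₀) ((if (j : ℕ) < s then 1 else -1) * shift (v j) f) =
        valAt (w - v i₀ + v j) f := by
    rw [AddValuation.map_mul, valAt_shift]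
    split_ifs <;> simp
  have hpole := hterm i₀
  rw [sub_add_cancel, valAt_eq_ordAt (ne_zero_of_hasPoleAt hw)] at hpole
  have hrest : 0 ≤ valAt (w - v i₀)
      (∑ j ∈ Finset.univ.erase i₀, (if (j : ℕ) < s then 1 else -1) * shift (v j) f) :=
    AddValuation.map_le_sum _ fun j hj => (hterm j).symm ▸
      valAt_nonneg_of_not_hasPoleAt (hiso j (Finset.ne_of_mem_erase hj))
  have hneg : (ordAt w f : WithTop ℤ) < 0 := by exact_mod_cast ordAt_neg_of_hasPoleAt hw
  rw [Lvf_eq_sum, ← Finset.add_sum_erase _ _ (Finset.mem_univ i₀),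
    AddValuation.map_add_eq_of_lt_left _ (hpole ▸ hneg.trans_le hrest), hpole]

lemma not_memE_Lvf_of_isolated_pole {p s : ℕ} (hp : 2 ≤ p) {v : Fin (s + s) → F}
    (hw : HasPoleAt f w) (hm : ¬ (p : ℤ) ∣ ordAt w f) (i₀ : Fin (s + s))
    (hiso : ∀ j ≠ i₀, ¬ HasPoleAt f (w - v i₀ + v j)) : ¬ MemE p (Lvf s f v) := by
  intro hE
  have hval := valAt_Lvf_of_isolated_pole hw i₀ hiso
  obtain ⟨k, hk⟩ := exists_valAt_eq_mul_of_memE hp hE (w - v i₀)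
    (by rw [hval]; exact_mod_cast ordAt_neg_of_hasPoleAt hw)
  exact hm ⟨k, WithTop.coe_injective (hval.symm.trans hk)⟩

end Isolation

open scoped Pointwise

section Poles

variable {F : Type*} [Field F]

lemma mem_roots_denom_iff_hasPoleAt {f : RatFunc F} {w : F} :
    w ∈ f.denom.roots ↔ HasPoleAt f w :=
  mem_roots (RatFunc.denom_ne_zero f)

lemma card_roots_denom_ratMap_le {E : Type*} [Field E] (φ : F →+* E) (f : RatFunc F) :
    (ratMap φ f).denom.roots.toFinset.card ≤ ratDeg f :=
  calc _ ≤ (ratMap φ f).denom.natDegree := (Multiset.toFinset_card_le _).trans (card_roots' _)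
    _ ≤ (f.denom.map φ).natDegree :=
        natDegree_le_of_dvd (RatFunc.denom_div_dvd _ _) (map_ne_zero (RatFunc.denom_ne_zero f))
    _ ≤ ratDeg f := (natDegree_map φ).trans_le (le_max_right _ _)

lemma exists_sub_mem_poles_of_memE_Lvf {p s : ℕ} (hp : 2 ≤ p) {f : RatFunc F} {w : F}
    (hw : HasPoleAt f w) (hm : ¬ (p : ℤ) ∣ ordAt w f) {v : Fin (s + s) → F}
    (hE : MemE p (Lvf s f v)) (i : Fin (s + s)) :
    ∃ j ≠ i, v i - v j ∈ f.denom.roots.toFinset - f.denom.roots.toFinset := by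
  by_contra! hfar
  refine not_memE_Lvf_of_isolated_pole hp hw hm i (fun j hj hpole => ?_) hE
  refine hfar j hj (Finset.mem_sub.mpr ⟨w, ?_, w - v i + v j, ?_, by ring⟩) <;>
    exact Multiset.mem_toFinset.mpr (mem_roots_denom_iff_hasPoleAt.mpr ‹_›)

end Poles

theorem statement_5_general (d s : ℕ) (hd : 1 ≤ d) :
    ∃ C : ℝ, 0 < C ∧
      ∀ (p q a : ℕ), p.Prime → 0 < a → q = p ^ a →
      ∀ (r : ℕ), 1 ≤ r →
      ∀ (K : Type) [Field K] [Fintype K], Fintype.card K = q ^ r →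
      ∀ (f : RatFunc K), MemR p d f →
      ∀ (V : Finset (AlgebraicClosure K)),
        (Set.ncard {v : Fin (s + s) → AlgebraicClosure K |
            (∀ i, v i ∈ V) ∧
              MemE p (Lvf s (ratMap (algebraMap K (AlgebraicClosure K)) f) v)} : ℝ)
          ≤ C * (V.card : ℝ) ^ s := by
  refine ⟨((s + s) ^ (s + s) * (d ^ 2) ^ (s + s) : ℕ),
    Nat.cast_pos.mpr (Nat.mul_pos Nat.pow_self_pos (by have : 0 < d := hd; positivity)), ?_⟩
  intro p q a hp _ _ r _ K _ _ _ f ⟨hdeg, w, hw, hord⟩ V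
  set F := ratMap (algebraMap K (AlgebraicClosure K)) f
  set P := F.denom.roots.toFinset
  have hsub :
      {v : Fin (s + s) → AlgebraicClosure K | (∀ i, v i ∈ V) ∧ MemE p (Lvf s F v)} ⊆
        {v | (∀ i, v i ∈ V) ∧ ∀ i, ∃ j ≠ i, v i - v j ∈ P - P} :=
    fun v ⟨hvV, hE⟩ => ⟨hvV, exists_sub_mem_poles_of_memE_Lvf hp.two_le hw hord hE⟩
  have hfin : {v : Fin (s + s) → AlgebraicClosure K |
      (∀ i, v i ∈ V) ∧ ∀ i, ∃ j ≠ i, v i - v j ∈ P - P}.Finite :=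
    (Fintype.piFinset fun _ => V).finite_toSet.subset fun v hv => by simpa using hv.1
  have hcount := (Set.ncard_le_ncard hsub hfin).trans (ncard_forall_exists_sub_mem_le (P - P) V)
  have hP : P.card ≤ d := (card_roots_denom_ratMap_le _ f).trans hdeg
  have hΔ : (P - P).card ≤ d ^ 2 := Finset.card_sub_le.trans (by nlinarith)
  rw [Fintype.card_fin, show (s + s) / 2 = s by omega] at hcount
  calc _ ≤ (((s + s) ^ (s + s) * (P - P).card ^ (s + s) * V.card ^ s : ℕ) : ℝ) := by
        exact_mod_cast hcount
    _ ≤ _ := by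
        push_cast
        gcongr
        exact_mod_cast hΔ

/-- Lemma 4.4 of the paper: for `f ∈ R_d`, the number of vectors `v ∈ V^{2s}`
for which `L_{v,f}` is exceptional is `O(V₀^s)`, uniformly in `p`, `q`, `r` and `V`. -/
theorem statement_5 (d s : ℕ) (hd : 1 ≤ d) (hs : 1 ≤ s) :
    ∃ C : ℝ, 0 < C ∧
      ∀ (p q a : ℕ), p.Prime → 0 < a → q = p ^ a →
      ∀ (r : ℕ), 1 ≤ r →
      ∀ (K : Type) [Field K] [Fintype K], Fintype.card K = q ^ r →
      ∀ (f : RatFunc K), MemR p d f →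
      ∀ (V : Finset (AlgebraicClosure K)),
        (Set.ncard {v : Fin (s + s) → AlgebraicClosure K |
            (∀ i, v i ∈ V) ∧
              MemE p (Lvf s (ratMap (algebraMap K (AlgebraicClosure K)) f) v)} : ℝ)
          ≤ C * (V.card : ℝ) ^ s :=
  statement_5_general d s hd

end RestrictedCoords
end
end

section
/- Fix integers s ≥ 1 and m ≥ 1. There exists a constant C > 0, depending only on s and m, such that for every abelian group G, every subset D ⊆ G with #D ≤ m, and every finite subset V ⊆ G of cardinality V_0, the number of vectors (v_1, …, v_{2s}) ∈ V^{2s} with the property that for every index i ∈ {1, …, 2s} there exists an index k ≠ i with v_i − v_k ∈ D, is at most C · V_0^s. -/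
open Polynomial

open scoped Classical

noncomputable section

namespace SimpleGraph

variable {ι : Type*} [Fintype ι] (Γ : SimpleGraph ι)

theorem two_mul_card_connectedComponent_le (h : ∀ i, ∃ k, Γ.Adj i k) :
    2 * Fintype.card Γ.ConnectedComponent ≤ Fintype.card ι := by
  have hfiber (c : Γ.ConnectedComponent) :
      2 ≤ (Finset.univ.filter fun i => Γ.connectedComponentMk i = c).card := by
    induction c using ConnectedComponent.ind with
    | h i =>
      obtain ⟨k, hik⟩ := h i
      calc 2 = ({i, k} : Finset ι).card := (Finset.card_pair hik.ne).symm
        _ ≤ _ := Finset.card_le_card fun j hj => by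
          rcases Finset.mem_insert.mp hj with rfl | hj
          · simp
          · simp [Finset.mem_singleton.mp hj, hik.reachable.symm]
  calc 2 * Fintype.card Γ.ConnectedComponent
      = ∑ _c : Γ.ConnectedComponent, 2 := by simp [mul_comm]
    _ ≤ ∑ c, (Finset.univ.filter fun i => Γ.connectedComponentMk i = c).card :=
      Finset.sum_le_sum fun c _ => hfiber c
    _ = Fintype.card ι := (Finset.card_eq_sum_card_fiberwise fun _ _ => Finset.mem_univ _).symm

end SimpleGraph

namespace RestrictedCoords

open Pointwise

section LinkedVectors

variable {G : Type*} [AddCommGroup G] {ι : Type*}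

def diffGraph (D : Finset G) (v : ι → G) : SimpleGraph ι :=
  SimpleGraph.fromRel fun i k => v i - v k ∈ D

def linkedVectors [Fintype ι] (D V : Finset G) : Finset (ι → G) :=
  (Fintype.piFinset fun _ => V).filter fun v => ∀ i, ∃ k, k ≠ i ∧ v i - v k ∈ D

theorem mem_linkedVectors [Fintype ι] {D V : Finset G} {v : ι → G} :
    v ∈ linkedVectors D V ↔ (∀ i, v i ∈ V) ∧ ∀ i, ∃ k, k ≠ i ∧ v i - v k ∈ D := by
  simp [linkedVectors]

theorem sub_mem_nsmul_of_walk {D : Finset G} {v : ι → G} {i k : ι}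
    (p : (diffGraph D v).Walk i k) : v i - v k ∈ p.length • (D ∪ -D) := by
  induction p with
  | nil => simp
  | @cons a b c hab p ih =>
    have hstep : v a - v b ∈ D ∪ -D := by
      rcases ((SimpleGraph.fromRel_adj _ _ _).mp hab).2 with h | h
      · exact Finset.mem_union_left _ h
      · exact Finset.mem_union_right _ (by simpa using Finset.neg_mem_neg h)
    rw [SimpleGraph.Walk.length_cons, succ_nsmul,
      show v a - v c = (v b - v c) + (v a - v b) by abel]
    exact Finset.add_mem_add ih hstep

theorem sub_mem_nsmul_of_reachable [Fintype ι] {D : Finset G} {v : ι → G} {i k : ι}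
    (h : (diffGraph D v).Reachable i k) :
    v i - v k ∈ Fintype.card ι • insert 0 (D ∪ -D) :=
  h.elim_path fun p => Finset.nsmul_subset_nsmul (Finset.subset_insert _ _)
    (Finset.mem_insert_self _ _) p.2.length_lt.le (sub_mem_nsmul_of_walk p.1)

def componentRep (D : Finset G) (v : ι → G) (i : ι) : ι :=
  ((diffGraph D v).connectedComponentMk i).out

theorem reachable_componentRep (D : Finset G) (v : ι → G) (i : ι) :
    (diffGraph D v).Reachable i (componentRep D v i) :=
  SimpleGraph.ConnectedComponent.exact (Quot.out_eq _).symm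

theorem two_mul_card_image_componentRep_le [Fintype ι] {D : Finset G} {v : ι → G}
    (hv : ∀ i, ∃ k, k ≠ i ∧ v i - v k ∈ D) :
    2 * (Finset.univ.image (componentRep D v)).card ≤ Fintype.card ι := by
  refine le_trans ?_ ((diffGraph D v).two_mul_card_connectedComponent_le fun i => ?_)
  · gcongr
    calc _ ≤ ((Finset.univ : Finset (diffGraph D v).ConnectedComponent).image
          fun c => c.out).card :=
          Finset.card_le_card (Finset.image_subset_iff.mpr fun i _ =>
            Finset.mem_image_of_mem _ (Finset.mem_univ _))
      _ ≤ _ := Finset.card_image_le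
  · obtain ⟨k, hki, hk⟩ := hv i
    exact ⟨k, (SimpleGraph.fromRel_adj _ _ _).mpr ⟨hki.symm, Or.inl hk⟩⟩

theorem card_filter_componentRep_eq_le [Fintype ι] (D V : Finset G) (ρ : ι → ι) :
    ((linkedVectors D V).filter fun v => componentRep D v = ρ).card ≤
      (Fintype.card ι • insert 0 (D ∪ -D)).card ^ Fintype.card ι *
        V.card ^ (Finset.univ.image ρ).card := by
  let fiber := (linkedVectors D V).filter fun v => componentRep D v = ρ
  let R := Finset.univ.image ρ
  -- `v` is recovered from its offsets to the representatives and its values on them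
  let encode (v : ι → G) : (ι → G) × (R → G) := (fun i => v i - v (ρ i), fun j => v j)
  let target := Fintype.piFinset (fun _ : ι => Fintype.card ι • insert 0 (D ∪ -D)) ×ˢ
    Fintype.piFinset fun _ : R => V
  have hmaps : Set.MapsTo encode fiber target := by
    intro v hv
    obtain ⟨hlinked, hρ⟩ := Finset.mem_filter.mp hv
    have hvV := (mem_linkedVectors.mp hlinked).1
    refine Finset.mem_product.mpr ⟨Fintype.mem_piFinset.mpr fun i => ?_,
      Fintype.mem_piFinset.mpr fun j => hvV j⟩
    show v i - v (ρ i) ∈ _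
    rw [← hρ]
    exact sub_mem_nsmul_of_reachable (reachable_componentRep D v i)
  have hinj : Set.InjOn encode fiber := by
    intro v _ w _ hvw
    funext i
    have hoffset : v i - v (ρ i) = w i - w (ρ i) := congrFun (congrArg Prod.fst hvw) i
    have hrep : v (ρ i) = w (ρ i) :=
      congrFun (congrArg Prod.snd hvw) ⟨ρ i, Finset.mem_image_of_mem _ (Finset.mem_univ i)⟩
    calc v i = (v i - v (ρ i)) + v (ρ i) := by abel
      _ = (w i - w (ρ i)) + w (ρ i) := by rw [hoffset, hrep]
      _ = w i := by abel
  refine (Finset.card_le_card_of_injOn encode hmaps hinj).trans_eq ?_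
  simp [target, R, Fintype.card_piFinset]

theorem card_linkedVectors_le [Fintype ι] (D V : Finset G) :
    (linkedVectors (ι := ι) D V).card ≤
      (Fintype.card ι * (2 * D.card + 1) ^ Fintype.card ι) ^ Fintype.card ι *
        V.card ^ (Fintype.card ι / 2) := by
  set n := Fintype.card ι
  let reps := Finset.univ.filter fun ρ : ι → ι => 2 * (Finset.univ.image ρ).card ≤ n
  have hmaps : Set.MapsTo (componentRep D) (linkedVectors (ι := ι) D V : Set (ι → G))
      (reps : Set (ι → ι)) := fun v hv => by
    simpa [reps] using two_mul_card_image_componentRep_le (mem_linkedVectors.mp hv).2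
  have hA : (insert 0 (D ∪ -D)).card ≤ 2 * D.card + 1 := by
    calc _ ≤ (D ∪ -D).card + 1 := Finset.card_insert_le _ _
      _ ≤ D.card + (-D).card + 1 := by gcongr; exact Finset.card_union_le _ _
      _ = 2 * D.card + 1 := by rw [Finset.card_neg]; ring
  have hnA : (n • insert 0 (D ∪ -D)).card ≤ (2 * D.card + 1) ^ n :=
    Finset.card_nsmul_le.trans (Nat.pow_le_pow_left hA n)
  have hpow : ∀ ρ ∈ reps, V.card ^ (Finset.univ.image ρ).card ≤ V.card ^ (n / 2) := by
    intro ρ hρ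
    have hρ := (Finset.mem_filter.mp hρ).2
    rcases (Finset.univ.image ρ).eq_empty_or_nonempty with he | hne
    · have : n = 0 := Fintype.card_eq_zero_iff.mpr
        ⟨fun i => by simpa [he] using Finset.mem_image_of_mem ρ (Finset.mem_univ i)⟩
      simp [he, this]
    rcases Nat.eq_zero_or_pos V.card with h0 | hpos
    · rw [h0, zero_pow hne.card_pos.ne', zero_pow (by have := hne.card_pos; omega)]
    · exact Nat.pow_le_pow_right hpos (by omega)
  calc (linkedVectors D V).card
      = ∑ ρ ∈ reps, ((linkedVectors D V).filter fun v => componentRep D v = ρ).card :=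
        Finset.card_eq_sum_card_fiberwise hmaps
    _ ≤ ∑ _ρ ∈ reps, ((2 * D.card + 1) ^ n) ^ n * V.card ^ (n / 2) :=
        Finset.sum_le_sum fun ρ hρ => (card_filter_componentRep_eq_le D V ρ).trans
          (Nat.mul_le_mul (Nat.pow_le_pow_left hnA n) (hpow ρ hρ))
    _ ≤ ∑ _ρ : ι → ι, ((2 * D.card + 1) ^ n) ^ n * V.card ^ (n / 2) :=
        Finset.sum_le_sum_of_subset (Finset.subset_univ _)
    _ = (n * (2 * D.card + 1) ^ n) ^ n * V.card ^ (n / 2) := by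
        simp [n]; ring

end LinkedVectors

theorem statement_11_general (s m : ℕ) (hs : 1 ≤ s) :
    ∃ C : ℝ, 0 < C ∧
      ∀ (G : Type) [AddCommGroup G] (D : Finset G), D.card ≤ m →
      ∀ (V : Finset G),
        (Set.ncard {v : Fin (s + s) → G |
            (∀ i, v i ∈ V) ∧ ∀ i, ∃ k, k ≠ i ∧ v i - v k ∈ D} : ℝ)
          ≤ C * (V.card : ℝ) ^ s := by
  refine ⟨(((s + s) * (2 * m + 1) ^ (s + s)) ^ (s + s) : ℕ),
    Nat.cast_pos.mpr (pow_pos (Nat.mul_pos (by omega) (pow_pos (by omega) _)) _), ?_⟩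
  intro G _ D hD V
  have hset : {v : Fin (s + s) → G | (∀ i, v i ∈ V) ∧ ∀ i, ∃ k, k ≠ i ∧ v i - v k ∈ D} =
      ↑(linkedVectors (ι := Fin (s + s)) D V) := by
    ext v
    exact mem_linkedVectors.symm
  have hcard := card_linkedVectors_le (ι := Fin (s + s)) D V
  rw [Fintype.card_fin, show (s + s) / 2 = s by omega] at hcard
  rw [hset, Set.ncard_coe_finset]
  exact_mod_cast hcard.trans (by gcongr)

/-- The counting step common to the proofs of Lemmas 4.1 and 4.4 of the paper:
the number of vectors `v ∈ V^{2s}` each of whose components differs from some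
other component by an element of a set `D` of at most `m` elements is `O(V₀^s)`. -/
theorem statement_11 (s m : ℕ) (hs : 1 ≤ s) (hm : 1 ≤ m) :
    ∃ C : ℝ, 0 < C ∧
      ∀ (G : Type) [AddCommGroup G] (D : Finset G), D.card ≤ m →
      ∀ (V : Finset G),
        (Set.ncard {v : Fin (s + s) → G |
            (∀ i, v i ∈ V) ∧ ∀ i, ∃ k, k ≠ i ∧ v i - v k ∈ D} : ℝ)
          ≤ C * (V.card : ℝ) ^ s :=
  statement_11_general s m hs

end RestrictedCoords
end
end
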